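/- arXiv:1810.02144 — 2 statements merged into one kernel-verified Lean document; each statement's English description precedes it below -/
import Mathlib

section
/- If the induced non-autonomous system on M(X) is weakly mixing of order m (for some m ≥ 2), then the base non-autonomous system (X, f_{1,∞}) is weakly mixing of order m. -/
/-! A probability measure giving mass `> 1/2` to `U` whose `n`-th pushforward gives mass
`> 1/2` to `V` must charge `U ∩ (f_1^n)⁻¹ V`, which is therefore non-empty. By the portmanteau
theorem the measures giving mass `> 1/2` to a fixed open set form an open subset of `M(X)`, and
Dirac masses show it is non-empty; so weak mixing of `M(X)`, applied to these sets, yields weak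
mixing of `X`. -/

open Set Filter MeasureTheory TopologicalSpace

/-- `iterN f n = f_{n-1} ∘ ⋯ ∘ f_0`, the `n`-th iterate of the non-autonomous system. -/
def iterN {X : Type*} (f : ℕ → X → X) : ℕ → X → X
  | 0 => id
  | n + 1 => f n ∘ iterN f n

/-- Topological transitivity of a non-autonomous system. -/
def NATransitive {X : Type*} [TopologicalSpace X] (f : ℕ → X → X) : Prop :=
  ∀ U V : Set X, IsOpen U → IsOpen V → U.Nonempty → V.Nonempty →
    ∃ n : ℕ, 0 < n ∧ (iterN f n '' U ∩ V).Nonempty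

/-- Weak mixing (order 2). -/
def NAWeaklyMixing {X : Type*} [TopologicalSpace X] (f : ℕ → X → X) : Prop :=
  ∀ U₁ U₂ V₁ V₂ : Set X, IsOpen U₁ → IsOpen U₂ → IsOpen V₁ → IsOpen V₂ →
    U₁.Nonempty → U₂.Nonempty → V₁.Nonempty → V₂.Nonempty →
    ∃ n : ℕ, 0 < n ∧ (iterN f n '' U₁ ∩ V₁).Nonempty ∧ (iterN f n '' U₂ ∩ V₂).Nonempty

/-- Weak mixing of order `m`. -/
def NAWeaklyMixingOrder {X : Type*} [TopologicalSpace X] (f : ℕ → X → X) (m : ℕ) : Prop :=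
  ∀ U V : Fin m → Set X, (∀ i, IsOpen (U i)) → (∀ i, IsOpen (V i)) →
    (∀ i, (U i).Nonempty) → (∀ i, (V i).Nonempty) →
    ∃ n : ℕ, 0 < n ∧ ∀ i, (iterN f n '' U i ∩ V i).Nonempty

/-- Banks's condition. -/
def NABanks {X : Type*} [TopologicalSpace X] (f : ℕ → X → X) : Prop :=
  ∀ U V W : Set X, IsOpen U → IsOpen V → IsOpen W →
    U.Nonempty → V.Nonempty → W.Nonempty →
    ∃ n : ℕ, 0 < n ∧ (iterN f n '' U ∩ V).Nonempty ∧ (iterN f n '' U ∩ W).Nonempty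

/-- Topological mixing. -/
def NAMixing {X : Type*} [TopologicalSpace X] (f : ℕ → X → X) : Prop :=
  ∀ U V : Set X, IsOpen U → IsOpen V → U.Nonempty → V.Nonempty →
    ∃ N : ℕ, ∀ n ≥ N, (iterN f n '' U ∩ V).Nonempty

/-- `blockC f s k = f_{s+k-1} ∘ ⋯ ∘ f_s`. -/
def blockC {X : Type*} (f : ℕ → X → X) (s k : ℕ) : X → X :=
  iterN (fun i => f (s + i)) k

/-- The `k`-th iterate system `f_{1,∞}^{[k]}`. -/
def kthSys {X : Type*} (f : ℕ → X → X) (k : ℕ) : ℕ → X → X :=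
  fun n => blockC f (n * k) k

/-- The induced non-autonomous system on Borel probability measures (pushforwards). -/
noncomputable def inducedM {X : Type*} [MeasurableSpace X] [TopologicalSpace X]
    [BorelSpace X] (f : ℕ → X → X) (hf : ∀ n, Continuous (f n)) :
    ℕ → ProbabilityMeasure X → ProbabilityMeasure X :=
  fun n μ => μ.map ((hf n).measurable.aemeasurable)

/-- The induced non-autonomous system on the hyperspace of non-empty compact subsets. -/
def inducedK {X : Type*} [TopologicalSpace X] (f : ℕ → X → X) (hf : ∀ n, Continuous (f n)) :
    ℕ → NonemptyCompacts X → NonemptyCompacts X :=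
  fun n K => ⟨⟨f n '' (K : Set X), K.isCompact.image (hf n)⟩, K.nonempty.image _⟩

/-- The set `N(U, δ)` of sensitivity times. -/
def NSet {X : Type*} [PseudoMetricSpace X] (f : ℕ → X → X) (U : Set X) (δ : ℝ) : Set ℕ :=
  {n | 0 < n ∧ ∃ x ∈ U, ∃ y ∈ U, δ < dist (iterN f n x) (iterN f n y)}

/-- Sensitive dependence on initial conditions. -/
def NASensitive {X : Type*} [PseudoMetricSpace X] (f : ℕ → X → X) : Prop :=
  ∃ δ : ℝ, 0 < δ ∧ ∀ x : X, ∀ U : Set X, IsOpen U → x ∈ U →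
    ∃ y ∈ U, ∃ n : ℕ, 0 < n ∧ δ < dist (iterN f n x) (iterN f n y)

/-- A thick subset of ℕ. -/
def ThickSet (S : Set ℕ) : Prop := ∀ p : ℕ, ∃ n : ℕ, ∀ j ≤ p, n + j ∈ S

/-- A syndetic subset of ℕ. -/
def SyndeticSet (S : Set ℕ) : Prop := ∃ a : ℕ, ∀ i : ℕ, ∃ j, i ≤ j ∧ j ≤ i + a ∧ j ∈ S

/-- Upper density of a subset of ℕ. -/
noncomputable def upperDens (S : Set ℕ) : ℝ :=
  Filter.limsup (fun n : ℕ => (Nat.card ↥(S ∩ Set.Iio n) : ℝ) / n) Filter.atTop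

/-- Periodic point of a non-autonomous system. -/
def NAPeriodicPt {X : Type*} (f : ℕ → X → X) (x : X) : Prop :=
  ∃ n : ℕ, 0 < n ∧ ∀ k : ℕ, 0 < k → iterN f (n * k) x = x

lemma iterN_continuous {X : Type*} [TopologicalSpace X] {f : ℕ → X → X}
    (hf : ∀ n, Continuous (f n)) (n : ℕ) : Continuous (iterN f n) := by
  induction n with
  | zero => exact continuous_id
  | succ k ih => exact (hf k).comp ih

lemma toMeasure_iterN_inducedM {X : Type*} [MeasurableSpace X] [TopologicalSpace X]
    [BorelSpace X] {f : ℕ → X → X} (hf : ∀ n, Continuous (f n)) (n : ℕ)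
    (μ : ProbabilityMeasure X) :
    ((iterN (inducedM f hf) n μ : ProbabilityMeasure X) : Measure X) =
      Measure.map (iterN f n) μ := by
  induction n with
  | zero => simp [iterN, Measure.map_id]
  | succ k ih =>
    change ((iterN (inducedM f hf) k μ).map (hf k).measurable.aemeasurable : Measure X) = _
    rw [ProbabilityMeasure.toMeasure_map, ih,
      Measure.map_map (hf k).measurable (iterN_continuous hf k).measurable]
    rfl

namespace MeasureTheory.ProbabilityMeasure

variable {Ω : Type*} [MeasurableSpace Ω]

lemma lowerSemicontinuous_measure_of_isOpen [TopologicalSpace Ω] [OpensMeasurableSpace Ω]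
    [HasOuterApproxClosed Ω] {G : Set Ω} (hG : IsOpen G) :
    LowerSemicontinuous fun μ : ProbabilityMeasure Ω => (μ : Measure Ω) G :=
  lowerSemicontinuous_iff_le_liminf.2 fun _ => le_liminf_measure_open_of_tendsto tendsto_id hG

lemma isOpen_setOf_lt_measure [TopologicalSpace Ω] [OpensMeasurableSpace Ω]
    [HasOuterApproxClosed Ω] {G : Set Ω} (hG : IsOpen G) (r : ENNReal) :
    IsOpen {μ : ProbabilityMeasure Ω | r < (μ : Measure Ω) G} :=
  lowerSemicontinuous_iff_isOpen_preimage.1 (lowerSemicontinuous_measure_of_isOpen hG) r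

lemma nonempty_setOf_lt_measure [MeasurableSingletonClass Ω] {W : Set Ω} (hW : W.Nonempty)
    {r : ENNReal} (hr : r < 1) :
    {μ : ProbabilityMeasure Ω | r < (μ : Measure Ω) W}.Nonempty := by
  obtain ⟨x, hx⟩ := hW
  refine ⟨⟨Measure.dirac x, inferInstance⟩, ?_⟩
  change r < Measure.dirac x W
  rwa [Measure.dirac_apply_of_mem hx]

lemma nonempty_inter_of_half_lt_measure (μ : ProbabilityMeasure Ω) {s t : Set Ω}
    (ht : MeasurableSet t) (hs : 1 / 2 < (μ : Measure Ω) s) (ht' : 1 / 2 < (μ : Measure Ω) t) :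
    (s ∩ t).Nonempty :=
  nonempty_inter_of_measure_lt_add μ ht (subset_univ s) (subset_univ t) <| by
    calc (μ : Measure Ω) univ = 1 / 2 + 1 / 2 := by rw [ENNReal.add_halves, measure_univ]
      _ < _ := ENNReal.add_lt_add hs ht'

end MeasureTheory.ProbabilityMeasure

theorem weaklyMixing_order_m_of_measures_general {X : Type*} [MetricSpace X]
    [MeasurableSpace X] [BorelSpace X] (f : ℕ → X → X) (hf : ∀ n, Continuous (f n))
    (m : ℕ) (h : NAWeaklyMixingOrder (inducedM f hf) m) :
    NAWeaklyMixingOrder f m := by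
  intro U V hU hV hUne hVne
  let majority (W : Set X) := {μ : ProbabilityMeasure X | 1 / 2 < (μ : Measure X) W}
  have half_lt_one : (1 / 2 : ENNReal) < 1 := ENNReal.half_lt_self one_ne_zero ENNReal.one_ne_top
  obtain ⟨n, hn, hmeet⟩ := h (majority ∘ U) (majority ∘ V)
    (fun i => ProbabilityMeasure.isOpen_setOf_lt_measure (hU i) _)
    (fun i => ProbabilityMeasure.isOpen_setOf_lt_measure (hV i) _)
    (fun i => ProbabilityMeasure.nonempty_setOf_lt_measure (hUne i) half_lt_one)
    (fun i => ProbabilityMeasure.nonempty_setOf_lt_measure (hVne i) half_lt_one)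
  refine ⟨n, hn, fun i => ?_⟩
  obtain ⟨_, ⟨μ, hμU, rfl⟩, hμV⟩ := hmeet i
  have hmeas := (iterN_continuous hf n).measurable
  rw [Function.comp_apply, mem_ofPred_eq, toMeasure_iterN_inducedM,
    Measure.map_apply hmeas (hV i).measurableSet] at hμV
  obtain ⟨x, hxU, hxV⟩ := ProbabilityMeasure.nonempty_inter_of_half_lt_measure μ
    ((hV i).measurableSet.preimage hmeas) hμU hμV
  exact ⟨_, mem_image_of_mem _ hxU, hxV⟩

/-- if the induced system on probability measures is weakly mixing of
order `m` (`m ≥ 2`), then so is the base system. -/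
theorem weaklyMixing_order_m_of_measures {X : Type*} [MetricSpace X] [CompactSpace X]
    [MeasurableSpace X] [BorelSpace X] (f : ℕ → X → X) (hf : ∀ n, Continuous (f n))
    (m : ℕ) (hm : 2 ≤ m) (h : NAWeaklyMixingOrder (inducedM f hf) m) :
    NAWeaklyMixingOrder f m :=
  weaklyMixing_order_m_of_measures_general f hf m h
end

section
/- For a commutative non-autonomous system (X, f_{1,∞}), the following are equivalent: (1) (X, f_{1,∞}) is weakly mixing; (2) the induced system (K(X), f̄_{1,∞}) on the hyperspace of non-empty compact subsets is weakly mixing; (3) the induced hyperspace system (K(X), f̄_{1,∞}) is topologically transitive. -/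
open Set Filter MeasureTheory TopologicalSpace

/-!
Since the `f i` commute, so do the iterates `T_k = iterN f k`. If `T_m U₁ ∩ U₂ ≠ ∅` and
`T_m V₁ ∩ V₂ ≠ ∅`, every hitting time of the single open pair `(U₁ ∩ T_m⁻¹ U₂, V₁ ∩ T_m⁻¹ V₂)` is a
hitting time of both `(U₁, V₁)` and `(U₂, V₂)`; hence weak mixing gives a common hitting time for
any finite family of pairs of open sets. Given basic Vietoris neighbourhoods `⟨U₁, …, Uₚ⟩` and
`⟨V₁, …, V_q⟩`, a common hitting time `n` of all pairs `(Uᵢ, Vⱼ)` and points `xᵢⱼ ∈ Uᵢ` with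
`T_n xᵢⱼ ∈ Vⱼ` give the finite set `K = {xᵢⱼ} ∈ ⟨U₁, …, Uₚ⟩` with `T_n K ∈ ⟨V₁, …, V_q⟩`, so the
induced system is weakly mixing. Conversely, transitivity on the hyperspace, applied to
`{K | K ⊆ U}` and `{K | K ∩ V ≠ ∅, K ∩ W ≠ ∅}`, is Banks's condition, which implies weak mixing
by the same one-pair trick.
-/

section Iterates

variable {X : Type*} {f : ℕ → X → X}

theorem continuous_iterN [TopologicalSpace X] (hf : ∀ n, Continuous (f n)) :
    ∀ n, Continuous (iterN f n)
  | 0 => continuous_id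
  | n + 1 => (hf n).comp (continuous_iterN hf n)

theorem commute_iterN (hc : ∀ i j, f i ∘ f j = f j ∘ f i) (m n : ℕ) :
    Function.Commute (iterN f m) (iterN f n) := by
  have hf : ∀ i n, Function.Commute (f i) (iterN f n) := by
    intro i n
    induction n with
    | zero => exact fun _ => rfl
    | succ n ih => exact .comp_right (fun x => congrFun (hc i n) x) ih
  induction m with
  | zero => exact fun _ => rfl
  | succ m ih => exact .comp_left (hf m n) ih

theorem coe_iterN_inducedK [TopologicalSpace X] (hf : ∀ n, Continuous (f n)) (n : ℕ)
    (K : NonemptyCompacts X) :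
    ((iterN (inducedK f hf) n K : NonemptyCompacts X) : Set X) = iterN f n '' K := by
  induction n with
  | zero => simp [iterN]
  | succ n ih =>
    change f n '' ((iterN (inducedK f hf) n K : NonemptyCompacts X) : Set X) =
      (f n ∘ iterN f n) '' K
    rw [ih, image_comp]

end Iterates

theorem Function.Commute.image_inter_nonempty_of_image_inter_preimage {X : Type*} {S T : X → X}
    (h : Function.Commute S T) {U V U' V' : Set X}
    (hne : (S '' (U ∩ T ⁻¹' U') ∩ (V ∩ T ⁻¹' V')).Nonempty) :
    (S '' U ∩ V).Nonempty ∧ (S '' U' ∩ V').Nonempty := by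
  obtain ⟨_, ⟨x, ⟨hxU, hxU'⟩, rfl⟩, hxV, hxV'⟩ := hne
  refine ⟨⟨S x, mem_image_of_mem S hxU, hxV⟩, ⟨S (T x), mem_image_of_mem S hxU', ?_⟩⟩
  rwa [h x]

section Dynamics

variable {X : Type*} [TopologicalSpace X] {f : ℕ → X → X}

theorem NAWeaklyMixing.naTransitive (h : NAWeaklyMixing f) : NATransitive f := by
  intro U V hU hV hU' hV'
  obtain ⟨n, hn, hUV, -⟩ := h U U V V hU hU hV hV hU' hU' hV' hV'
  exact ⟨n, hn, hUV⟩

theorem NAWeaklyMixing.exists_pair_refining_pairs (hf : ∀ n, Continuous (f n))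
    (hc : ∀ i j, f i ∘ f j = f j ∘ f i) (h : NAWeaklyMixing f) {U₁ V₁ U₂ V₂ : Set X}
    (hU₁ : IsOpen U₁) (hV₁ : IsOpen V₁) (hU₂ : IsOpen U₂) (hV₂ : IsOpen V₂)
    (hU₁' : U₁.Nonempty) (hV₁' : V₁.Nonempty) (hU₂' : U₂.Nonempty) (hV₂' : V₂.Nonempty) :
    ∃ U V : Set X, IsOpen U ∧ IsOpen V ∧ U.Nonempty ∧ V.Nonempty ∧
      ∀ k, (iterN f k '' U ∩ V).Nonempty →
        (iterN f k '' U₁ ∩ V₁).Nonempty ∧ (iterN f k '' U₂ ∩ V₂).Nonempty := by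
  obtain ⟨m, -, ⟨_, ⟨x, hxU₁, rfl⟩, hxU₂⟩, ⟨_, ⟨y, hyV₁, rfl⟩, hyV₂⟩⟩ :=
    h U₁ V₁ U₂ V₂ hU₁ hV₁ hU₂ hV₂ hU₁' hV₁' hU₂' hV₂'
  have hT := continuous_iterN hf m
  exact ⟨U₁ ∩ iterN f m ⁻¹' U₂, V₁ ∩ iterN f m ⁻¹' V₂, hU₁.inter (hU₂.preimage hT),
    hV₁.inter (hV₂.preimage hT), ⟨x, hxU₁, hxU₂⟩, ⟨y, hyV₁, hyV₂⟩,
    fun k => (commute_iterN hc k m).image_inter_nonempty_of_image_inter_preimage⟩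

theorem NAWeaklyMixing.exists_forall_image_inter_nonempty (hf : ∀ n, Continuous (f n))
    (hc : ∀ i j, f i ∘ f j = f j ∘ f i) (h : NAWeaklyMixing f) {S : Set (Set X × Set X)}
    (hS : S.Finite) (hS' : ∀ p ∈ S, IsOpen p.1 ∧ IsOpen p.2 ∧ p.1.Nonempty ∧ p.2.Nonempty) :
    ∃ n, 0 < n ∧ ∀ p ∈ S, (iterN f n '' p.1 ∩ p.2).Nonempty := by
  suffices hpair : ∀ U₀ V₀ : Set X, IsOpen U₀ → IsOpen V₀ → U₀.Nonempty → V₀.Nonempty →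
      ∃ U V : Set X, IsOpen U ∧ IsOpen V ∧ U.Nonempty ∧ V.Nonempty ∧
        ∀ k, (iterN f k '' U ∩ V).Nonempty → (iterN f k '' U₀ ∩ V₀).Nonempty ∧
          ∀ p ∈ S, (iterN f k '' p.1 ∩ p.2).Nonempty by
    rcases S.eq_empty_or_nonempty with rfl | ⟨p, hp⟩
    · exact ⟨1, one_pos, by simp⟩
    obtain ⟨hU₀, hV₀, hU₀', hV₀'⟩ := hS' p hp
    obtain ⟨U, V, hU, hV, hU', hV', hUV⟩ := hpair p.1 p.2 hU₀ hV₀ hU₀' hV₀'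
    obtain ⟨n, hn, hn'⟩ := h.naTransitive U V hU hV hU' hV'
    exact ⟨n, hn, (hUV n hn').2⟩
  induction S, hS using Set.Finite.induction_on with
  | empty =>
    intro U₀ V₀ hU₀ hV₀ hU₀' hV₀'
    exact ⟨U₀, V₀, hU₀, hV₀, hU₀', hV₀', fun _ hk => ⟨hk, by simp⟩⟩
  | @insert q S _ _ ih =>
    intro U₀ V₀ hU₀ hV₀ hU₀' hV₀'
    obtain ⟨hU₁, hV₁, hU₁', hV₁'⟩ := hS' q (mem_insert q S)
    obtain ⟨U, V, hU, hV, hU', hV', hUV⟩ :=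
      h.exists_pair_refining_pairs hf hc hU₀ hV₀ hU₁ hV₁ hU₀' hV₀' hU₁' hV₁'
    obtain ⟨W, Z, hW, hZ, hW', hZ', hWZ⟩ :=
      ih (fun p hp => hS' p (mem_insert_of_mem q hp)) U V hU hV hU' hV'
    refine ⟨W, Z, hW, hZ, hW', hZ', fun k hk => ?_⟩
    obtain ⟨hkUV, hkS⟩ := hWZ k hk
    refine ⟨(hUV k hkUV).1, fun p hp => ?_⟩
    rcases mem_insert_iff.1 hp with rfl | hp
    · exact (hUV k hkUV).2
    · exact hkS p hp

theorem NABanks.naWeaklyMixing (hf : ∀ n, Continuous (f n))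
    (hc : ∀ i j, f i ∘ f j = f j ∘ f i) (h : NABanks f) : NAWeaklyMixing f := by
  intro A B C D hA hB hC hD hA' hB' hC' hD'
  obtain ⟨m, -, ⟨_, ⟨x, hxB, rfl⟩, hxA⟩, ⟨_, ⟨y, hyB, rfl⟩, hyC⟩⟩ := h B A C hB hA hC hB' hA' hC'
  have hT := continuous_iterN hf m
  obtain ⟨k, hk, hkAC, hkD⟩ := h (B ∩ iterN f m ⁻¹' A) (B ∩ iterN f m ⁻¹' C) D
    (hB.inter (hA.preimage hT)) (hB.inter (hC.preimage hT)) hD ⟨x, hxB, hxA⟩ ⟨y, hyB, hyC⟩ hD'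
  exact ⟨k, hk, ((commute_iterN hc k m).image_inter_nonempty_of_image_inter_preimage hkAC).2,
    hkD.mono (inter_subset_inter_left D (image_mono inter_subset_left))⟩

end Dynamics

/-- The basic Vietoris open set `⟨U₁, …, Uₚ⟩` when `u = {U₁, …, Uₚ}`. -/
def vietorisBasic {X : Type*} (u : Set (Set X)) : Set (Set X) :=
  {K | K ⊆ ⋃₀ u ∧ ∀ U ∈ u, (K ∩ U).Nonempty}

theorem exists_finite_mem_vietorisBasic_image_mem_vietorisBasic {X Y : Type*} {T : X → Y}
    {u : Set (Set X)} {v : Set (Set Y)} (hu : u.Finite) (hv : v.Finite) (hu' : u.Nonempty)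
    (hv' : v.Nonempty) (h : ∀ U ∈ u, ∀ V ∈ v, (T '' U ∩ V).Nonempty) :
    ∃ K : Set X, K.Finite ∧ K.Nonempty ∧ K ∈ vietorisBasic u ∧ T '' K ∈ vietorisBasic v := by
  obtain ⟨U₀, hU₀⟩ := hu'
  obtain ⟨V₀, hV₀⟩ := hv'
  have h' : ∀ U ∈ u, ∀ V ∈ v, ∃ x, x ∈ U ∧ T x ∈ V := by
    intro U hU V hV
    obtain ⟨_, ⟨x, hxU, rfl⟩, hxV⟩ := h U hU V hV
    exact ⟨x, hxU, hxV⟩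
  obtain ⟨x₀, -⟩ := h' U₀ hU₀ V₀ hV₀
  have : Nonempty X := ⟨x₀⟩
  choose! g hgU hgV using h'
  refine ⟨(fun p => g p.1 p.2) '' u ×ˢ v, (hu.prod hv).image _,
    ⟨_, mem_image_of_mem _ (mk_mem_prod hU₀ hV₀)⟩, ⟨?_, fun U hU => ?_⟩, ⟨?_, fun V hV => ?_⟩⟩
  · rintro _ ⟨⟨U, V⟩, ⟨hU, hV⟩, rfl⟩
    exact mem_sUnion_of_mem (hgU U hU V hV) hU
  · exact ⟨g U V₀, mem_image_of_mem _ (mk_mem_prod hU hV₀), hgU U hU V₀ hV₀⟩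
  · rintro _ ⟨_, ⟨⟨U, V⟩, ⟨hU, hV⟩, rfl⟩, rfl⟩
    exact mem_sUnion_of_mem (hgV U hU V hV) hV
  · exact ⟨T (g U₀ V), mem_image_of_mem T (mem_image_of_mem _ (mk_mem_prod hU₀ hV)),
      hgV U₀ hU₀ V hV⟩

section Hyperspace

variable {X : Type*} [TopologicalSpace X] {f : ℕ → X → X}

theorem NonemptyCompacts.exists_vietorisBasic_subset {𝒰 : Set (NonemptyCompacts X)}
    (h𝒰 : IsOpen 𝒰) (hne : 𝒰.Nonempty) :
    ∃ u : Set (Set X), u.Finite ∧ u.Nonempty ∧ (∀ U ∈ u, IsOpen U ∧ U.Nonempty) ∧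
      ∀ K : NonemptyCompacts X, (K : Set X) ∈ vietorisBasic u → K ∈ 𝒰 := by
  obtain ⟨K, hK⟩ := hne
  obtain ⟨_, ⟨u, ⟨hu, hu', huo⟩, rfl⟩, hKu, hu𝒰⟩ :=
    NonemptyCompacts.isTopologicalBasis.exists_subset_of_mem_open hK h𝒰
  exact ⟨u, hu, hu', fun U hU => ⟨huo U hU, (hKu.2 U hU).mono inter_subset_right⟩,
    fun L hL => hu𝒰 hL⟩

theorem image_iterN_inducedK_inter_nonempty_of_vietorisBasic (hf : ∀ n, Continuous (f n)) {n : ℕ}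
    {u v : Set (Set X)} (hu : u.Finite) (hv : v.Finite) (hu' : u.Nonempty) (hv' : v.Nonempty)
    (h : ∀ U ∈ u, ∀ V ∈ v, (iterN f n '' U ∩ V).Nonempty) {𝒰 𝒱 : Set (NonemptyCompacts X)}
    (hu𝒰 : ∀ K : NonemptyCompacts X, (K : Set X) ∈ vietorisBasic u → K ∈ 𝒰)
    (hv𝒱 : ∀ K : NonemptyCompacts X, (K : Set X) ∈ vietorisBasic v → K ∈ 𝒱) :
    (iterN (inducedK f hf) n '' 𝒰 ∩ 𝒱).Nonempty := by
  obtain ⟨K, hK, hK', hKu, hKv⟩ :=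
    exists_finite_mem_vietorisBasic_image_mem_vietorisBasic hu hv hu' hv' h
  let L : NonemptyCompacts X := ⟨⟨K, hK.isCompact⟩, hK'⟩
  refine ⟨_, mem_image_of_mem _ (hu𝒰 L hKu), hv𝒱 _ ?_⟩
  rwa [coe_iterN_inducedK]

theorem NAWeaklyMixing.inducedK (hf : ∀ n, Continuous (f n))
    (hc : ∀ i j, f i ∘ f j = f j ∘ f i) (h : NAWeaklyMixing f) :
    NAWeaklyMixing (inducedK f hf) := by
  intro 𝒰₁ 𝒰₂ 𝒱₁ 𝒱₂ h𝒰₁ h𝒰₂ h𝒱₁ h𝒱₂ h𝒰₁' h𝒰₂' h𝒱₁' h𝒱₂'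
  obtain ⟨u₁, hu₁, hu₁', hu₁o, hu₁𝒰⟩ := NonemptyCompacts.exists_vietorisBasic_subset h𝒰₁ h𝒰₁'
  obtain ⟨u₂, hu₂, hu₂', hu₂o, hu₂𝒰⟩ := NonemptyCompacts.exists_vietorisBasic_subset h𝒰₂ h𝒰₂'
  obtain ⟨v₁, hv₁, hv₁', hv₁o, hv₁𝒱⟩ := NonemptyCompacts.exists_vietorisBasic_subset h𝒱₁ h𝒱₁'
  obtain ⟨v₂, hv₂, hv₂', hv₂o, hv₂𝒱⟩ := NonemptyCompacts.exists_vietorisBasic_subset h𝒱₂ h𝒱₂'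
  obtain ⟨n, hn, hS⟩ := h.exists_forall_image_inter_nonempty hf hc
    ((hu₁.prod hv₁).union (hu₂.prod hv₂)) <| by
      rintro ⟨U, V⟩ (⟨hU, hV⟩ | ⟨hU, hV⟩)
      exacts [⟨(hu₁o U hU).1, (hv₁o V hV).1, (hu₁o U hU).2, (hv₁o V hV).2⟩,
        ⟨(hu₂o U hU).1, (hv₂o V hV).1, (hu₂o U hU).2, (hv₂o V hV).2⟩]
  exact ⟨n, hn,
    image_iterN_inducedK_inter_nonempty_of_vietorisBasic hf hu₁ hv₁ hu₁' hv₁'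
      (fun U hU V hV => hS (U, V) (.inl ⟨hU, hV⟩)) hu₁𝒰 hv₁𝒱,
    image_iterN_inducedK_inter_nonempty_of_vietorisBasic hf hu₂ hv₂ hu₂' hv₂'
      (fun U hU V hV => hS (U, V) (.inr ⟨hU, hV⟩)) hu₂𝒰 hv₂𝒱⟩

theorem NATransitive.naBanks_of_inducedK (hf : ∀ n, Continuous (f n))
    (h : NATransitive (inducedK f hf)) : NABanks f := by
  intro U V W hU hV hW ⟨u, hu⟩ ⟨v, hv⟩ ⟨w, hw⟩
  obtain ⟨n, hn, _, ⟨K, hKU, rfl⟩, hKV, hKW⟩ :=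
    h {K | (K : Set X) ⊆ U} ({K | ((K : Set X) ∩ V).Nonempty} ∩ {K | ((K : Set X) ∩ W).Nonempty})
      (NonemptyCompacts.isOpen_subsets_of_isOpen hU)
      ((NonemptyCompacts.isOpen_inter_nonempty_of_isOpen hV).inter
        (NonemptyCompacts.isOpen_inter_nonempty_of_isOpen hW))
      ⟨{u}, by simpa using hu⟩ ⟨{v} ⊔ {w}, ⟨v, by simp, hv⟩, ⟨w, by simp, hw⟩⟩
  rw [mem_ofPred_eq, coe_iterN_inducedK] at hKV hKW
  exact ⟨n, hn, hKV.mono (inter_subset_inter_left V (image_mono hKU)),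
    hKW.mono (inter_subset_inter_left W (image_mono hKU))⟩

end Hyperspace

theorem commutative_weaklyMixing_tfae_hyperspace_general {X : Type*} [MetricSpace X]
    (f : ℕ → X → X) (hf : ∀ n, Continuous (f n))
    (hc : ∀ i j, f i ∘ f j = f j ∘ f i) :
    (NAWeaklyMixing f ↔ NAWeaklyMixing (inducedK f hf)) ∧
      (NAWeaklyMixing (inducedK f hf) ↔ NATransitive (inducedK f hf)) := by
  have hlift : NAWeaklyMixing f → NAWeaklyMixing (inducedK f hf) := NAWeaklyMixing.inducedK hf hc
  have hdescend : NATransitive (inducedK f hf) → NAWeaklyMixing f :=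
    fun h => (h.naBanks_of_inducedK hf).naWeaklyMixing hf hc
  exact ⟨⟨hlift, fun h => hdescend h.naTransitive⟩,
    ⟨NAWeaklyMixing.naTransitive, fun h => hlift (hdescend h)⟩⟩

/-- for a commutative non-autonomous system, weak mixing of the base system,
weak mixing of the induced hyperspace system on `K(X)`, and transitivity of the induced
hyperspace system are all equivalent. -/
theorem commutative_weaklyMixing_tfae_hyperspace {X : Type*} [MetricSpace X] [CompactSpace X]
    (f : ℕ → X → X) (hf : ∀ n, Continuous (f n))
    (hc : ∀ i j, f i ∘ f j = f j ∘ f i) :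
    (NAWeaklyMixing f ↔ NAWeaklyMixing (inducedK f hf)) ∧
      (NAWeaklyMixing (inducedK f hf) ↔ NATransitive (inducedK f hf)) :=
  commutative_weaklyMixing_tfae_hyperspace_general f hf hc
end
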